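/- The Heawood graph is 4-ordered hamiltonian: for any sequence of 4 distinct vertices v1, v2, v3, v4, there exists a Hamiltonian cycle containing these 4 vertices in the specified order. -/

import Mathlib

/-- A Hamiltonian cycle in `G` containing the four vertices `v₁, v₂, v₃, v₄`
in this order: it decomposes as four consecutive walks
`v₁ → v₂ → v₃ → v₄ → v₁`. -/
def SimpleGraph.HamCycleInOrder4 {V : Type*} [DecidableEq V] (G : SimpleGraph V)
    (v₁ v₂ v₃ v₄ : V) : Prop :=
  ∃ (p : G.Walk v₁ v₂) (q : G.Walk v₂ v₃) (r : G.Walk v₃ v₄) (s : G.Walk v₄ v₁),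
    (p.append (q.append (r.append s))).IsHamiltonianCycle

/-- `G` is `4`-ordered hamiltonian: for any four distinct vertices there is a
Hamiltonian cycle containing them in the specified order. -/
def SimpleGraph.FourOrderedHamiltonian {V : Type*} [DecidableEq V] (G : SimpleGraph V) : Prop :=
  ∀ v₁ v₂ v₃ v₄ : V, v₁ ≠ v₂ → v₁ ≠ v₃ → v₁ ≠ v₄ → v₂ ≠ v₃ → v₂ ≠ v₄ →
    v₃ ≠ v₄ → G.HamCycleInOrder4 v₁ v₂ v₃ v₄

/-- The Heawood graph: the 14-cycle `0-1-⋯-13-0` on `ZMod 14` together with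
chords joining `i` to `i + 5 (mod 14)` for each even `i`. -/
def heawoodGraph : SimpleGraph (ZMod 14) :=
  SimpleGraph.fromRel (fun i j => j = i + 1 ∨ (Even i.val ∧ j = i + 5))

/-!
The maps `i ↦ i + t` (`t` even) and `i ↦ c - i` (`c` odd) are automorphisms of the Heawood graph
acting transitively on its vertices, so we may take `v₁ = 0`. Any three vertices met in this order
along a Hamiltonian cycle from `0` cut it into the four required walks. The Heawood graph has 24
Hamiltonian cycles; read from `0` in both directions they give 48 orderings of the other 13
vertices, and every ordered triple of distinct nonzero vertices is a subsequence of one of them.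
-/

namespace SimpleGraph

variable {V : Type*} {G : SimpleGraph V}

theorem Walk.getVert_eq_of_getElem?_support_eq {u v w : V} {p : G.Walk u v} {n : ℕ}
    (h : p.support[n]? = some w) : p.getVert n = w := by
  obtain ⟨hn, rfl⟩ := List.getElem?_eq_some_iff.mp h
  exact p.getVert_eq_support_getElem (by rw [Walk.length_support] at hn; omega)

theorem exists_isHamiltonianCycle_support_eq [DecidableEq V] {u : V} {l : List V}
    (hchain : (u :: l ++ [u]).IsChain G.Adj) (hnodup : (u :: l).Nodup)
    (hcover : ∀ x, x ∈ u :: l) (hlen : 2 ≤ l.length) :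
    ∃ c : G.Walk u u, c.IsHamiltonianCycle ∧ c.support = u :: l ++ [u] := by
  obtain ⟨c, hsupp⟩ : ∃ c : G.Walk u u, c.support = u :: l ++ [u] :=
    ⟨(Walk.ofSupport _ (List.cons_ne_nil _ _) hchain).copy rfl (by simp),
      (Walk.support_copy _ _ _).trans (Walk.support_ofSupport _ _)⟩
  have hlength : c.length = l.length + 1 := by
    have := c.length_support
    simp only [hsupp, List.cons_append, List.length_cons, List.length_append, List.length_nil]
      at this
    omega
  have hnil : ¬ c.Nil := by
    rw [← Walk.length_eq_zero_iff]
    omega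
  have htail : c.tail.IsPath := by
    rw [Walk.isPath_def, Walk.support_tail_of_not_nil _ hnil, hsupp]
    exact (List.perm_append_singleton u l).nodup_iff.mpr hnodup
  refine ⟨c, ⟨Walk.isCycle_iff_isPath_tail_and_le_length.mpr ⟨htail, ?_⟩,
    htail.isHamiltonian_of_mem fun x => ?_⟩, hsupp⟩
  · omega
  · rw [Walk.support_tail_of_not_nil _ hnil, hsupp]
    simpa [or_comm] using hcover x

variable [DecidableEq V]

theorem Walk.IsHamiltonianCycle.hamCycleInOrder4_getVert {u : V} {c : G.Walk u u}
    (hc : c.IsHamiltonianCycle) {i j k : ℕ} (hij : i ≤ j) (hjk : j ≤ k) :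
    G.HamCycleInOrder4 u (c.getVert i) (c.getVert j) (c.getVert k) := by
  obtain ⟨j, rfl⟩ := Nat.exists_eq_add_of_le hij
  obtain ⟨k, rfl⟩ := Nat.exists_eq_add_of_le hjk
  rw [Nat.add_assoc, ← c.drop_getVert i (j + k), ← (c.drop i).drop_getVert j k,
    ← c.drop_getVert i j]
  refine ⟨c.take i, (c.drop i).take j, ((c.drop i).drop j).take k, ((c.drop i).drop j).drop k, ?_⟩
  simpa only [Walk.append_take_drop_eq] using hc

theorem Walk.IsHamiltonianCycle.hamCycleInOrder4_of_sublist {u v₂ v₃ v₄ : V} {c : G.Walk u u}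
    (hc : c.IsHamiltonianCycle) (h : [v₂, v₃, v₄].Sublist c.support) :
    G.HamCycleInOrder4 u v₂ v₃ v₄ := by
  obtain ⟨f, hf⟩ := List.sublist_iff_exists_orderEmbedding_getElem?_eq.mp h
  have hv (n : ℕ) (w : V) (hw : [v₂, v₃, v₄][n]? = some w) : c.getVert (f n) = w :=
    Walk.getVert_eq_of_getElem?_support_eq ((hf n).symm.trans hw)
  rw [← hv 0 v₂ rfl, ← hv 1 v₃ rfl, ← hv 2 v₄ rfl]
  exact hc.hamCycleInOrder4_getVert (f.monotone (by norm_num)) (f.monotone (by norm_num))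

theorem HamCycleInOrder4.map {W : Type*} [DecidableEq W] {H : SimpleGraph W} (e : G ≃g H)
    {v₁ v₂ v₃ v₄ : V} (h : G.HamCycleInOrder4 v₁ v₂ v₃ v₄) :
    H.HamCycleInOrder4 (e v₁) (e v₂) (e v₃) (e v₄) := by
  obtain ⟨p, q, r, s, hc⟩ := h
  refine ⟨p.map e.toHom, q.map e.toHom, r.map e.toHom, s.map e.toHom, ?_⟩
  simpa only [Walk.map_append] using hc.map e.bijective

theorem fourOrderedHamiltonian_of_forall_exists_iso (u : V)
    (htrans : ∀ v, ∃ e : G ≃g G, e u = v)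
    (h : ∀ v₂ v₃ v₄, [u, v₂, v₃, v₄].Nodup → G.HamCycleInOrder4 u v₂ v₃ v₄) :
    G.FourOrderedHamiltonian := by
  intro v₁ v₂ v₃ v₄ h₁₂ h₁₃ h₁₄ h₂₃ h₂₄ h₃₄
  obtain ⟨e, rfl⟩ := htrans v₁
  have hnodup : ([e u, v₂, v₃, v₄].map e.symm).Nodup :=
    List.Nodup.map e.symm.injective (by simp [*])
  simpa using (h (e.symm v₂) (e.symm v₃) (e.symm v₄) (by simpa using hnodup)).map e

end SimpleGraph

instance : DecidableRel heawoodGraph.Adj :=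
  fun a b => decidable_of_iff' _ (SimpleGraph.fromRel_adj _ a b)

theorem heawoodGraph_adj_add_iff {t : ZMod 14} (ht : Even t.val) {i j : ZMod 14} :
    heawoodGraph.Adj (i + t) (j + t) ↔ heawoodGraph.Adj i j := by
  revert t i j
  decide

theorem heawoodGraph_adj_sub_iff {c : ZMod 14} (hc : Odd c.val) {i j : ZMod 14} :
    heawoodGraph.Adj (c - i) (c - j) ↔ heawoodGraph.Adj i j := by
  revert c i j
  decide

theorem heawoodGraph_exists_iso_apply_zero (v : ZMod 14) :
    ∃ e : heawoodGraph ≃g heawoodGraph, e 0 = v := by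
  rcases Nat.even_or_odd v.val with hv | hv
  · exact ⟨{ Equiv.addRight v with map_rel_iff' := heawoodGraph_adj_add_iff hv }, zero_add v⟩
  · exact ⟨{ Equiv.subLeft v with map_rel_iff' := heawoodGraph_adj_sub_iff hv }, sub_zero v⟩

def heawoodHamCycles : List (List (ZMod 14)) := [
  [1, 2, 3, 4, 5, 6, 7, 8, 9, 10, 11, 12, 13],
  [1, 2, 3, 4, 9, 10, 11, 12, 13, 8, 7, 6, 5],
  [1, 2, 3, 12, 11, 10, 9, 4, 5, 6, 7, 8, 13],
  [1, 2, 3, 12, 13, 8, 7, 6, 11, 10, 9, 4, 5],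
  [1, 2, 7, 6, 5, 4, 3, 12, 11, 10, 9, 8, 13],
  [1, 2, 7, 6, 11, 10, 9, 8, 13, 12, 3, 4, 5],
  [1, 2, 7, 8, 9, 10, 11, 6, 5, 4, 3, 12, 13],
  [1, 2, 7, 8, 13, 12, 3, 4, 9, 10, 11, 6, 5],
  [1, 10, 9, 4, 3, 2, 7, 8, 13, 12, 11, 6, 5],
  [1, 10, 9, 4, 5, 6, 11, 12, 3, 2, 7, 8, 13],
  [1, 10, 9, 8, 7, 2, 3, 4, 5, 6, 11, 12, 13],
  [1, 10, 9, 8, 13, 12, 11, 6, 7, 2, 3, 4, 5],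
  [1, 10, 11, 6, 5, 4, 9, 8, 7, 2, 3, 12, 13],
  [1, 10, 11, 6, 7, 2, 3, 12, 13, 8, 9, 4, 5],
  [1, 10, 11, 12, 3, 2, 7, 6, 5, 4, 9, 8, 13],
  [1, 10, 11, 12, 13, 8, 9, 4, 3, 2, 7, 6, 5],
  [5, 4, 3, 2, 1, 10, 9, 8, 7, 6, 11, 12, 13],
  [5, 4, 3, 12, 11, 6, 7, 2, 1, 10, 9, 8, 13],
  [5, 4, 9, 8, 7, 6, 11, 10, 1, 2, 3, 12, 13],
  [5, 4, 9, 10, 1, 2, 3, 12, 11, 6, 7, 8, 13],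
  [5, 6, 7, 2, 1, 10, 11, 12, 3, 4, 9, 8, 13],
  [5, 6, 7, 8, 9, 4, 3, 2, 1, 10, 11, 12, 13],
  [5, 6, 11, 10, 1, 2, 7, 8, 9, 4, 3, 12, 13],
  [5, 6, 11, 12, 3, 4, 9, 10, 1, 2, 7, 8, 13]]

theorem heawoodHamCycles_hamiltonian :
    ∀ m ∈ heawoodHamCycles ++ heawoodHamCycles.map List.reverse,
      (0 :: m ++ [0]).IsChain heawoodGraph.Adj ∧ (0 :: m).Nodup ∧ (∀ x, x ∈ 0 :: m) ∧
        2 ≤ m.length := by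
  decide

theorem heawoodHamCycles_exists_sublist :
    ∀ v₂ v₃ v₄ : ZMod 14, [0, v₂, v₃, v₄].Nodup →
      ∃ m ∈ heawoodHamCycles ++ heawoodHamCycles.map List.reverse, [v₂, v₃, v₄].Sublist m := by
  decide

theorem heawoodGraph_hamCycleInOrder4_zero (v₂ v₃ v₄ : ZMod 14) (h : [0, v₂, v₃, v₄].Nodup) :
    heawoodGraph.HamCycleInOrder4 0 v₂ v₃ v₄ := by
  obtain ⟨m, hm, hsub⟩ := heawoodHamCycles_exists_sublist v₂ v₃ v₄ h
  obtain ⟨hchain, hnodup, hcover, hlen⟩ := heawoodHamCycles_hamiltonian m hm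
  obtain ⟨c, hc, hsupp⟩ :=
    SimpleGraph.exists_isHamiltonianCycle_support_eq hchain hnodup hcover hlen
  refine hc.hamCycleInOrder4_of_sublist ?_
  rw [hsupp]
  exact hsub.trans ((List.sublist_append_left m [0]).cons 0)

theorem heawood_fourOrderedHamiltonian : heawoodGraph.FourOrderedHamiltonian :=
  heawoodGraph.fourOrderedHamiltonian_of_forall_exists_iso 0 heawoodGraph_exists_iso_apply_zero
    heawoodGraph_hamCycleInOrder4_zero
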